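/- Under the hypotheses of the semidiscrete entropy decay statement, one has the quantitative dissipation estimate H(u) − H(uⁿ) ≤ −τ ∫₀^m (u')² Ψ''(u') |(u − uⁿ)/τ|² dx ≤ 0. -/

import Mathlib

open MeasureTheory Real Set intervalIntegral


-- log is interval integrable on [0,b]
lemma log_iI {b : ℝ} (hb : 0 < b) : IntervalIntegrable Real.log volume 0 b := by
  rw [intervalIntegrable_iff_integrableOn_Ioc_of_le hb.le]
  have hmeas : AEStronglyMeasurable Real.log (volume.restrict (Ioc (0:ℝ) b)) :=
    Real.measurable_log.aestronglyMeasurable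
  refine Integrable.mono' (g := fun s => 2 * s ^ (-(1/2) : ℝ) + |Real.log b|) ?_ hmeas ?_
  · have h1 : IntervalIntegrable (fun s : ℝ => s ^ (-(1/2) : ℝ)) volume 0 b :=
      intervalIntegrable_rpow' (by norm_num)
    have := ((h1.const_mul 2).add (_root_.intervalIntegrable_const (c := |Real.log b|)))
    rw [intervalIntegrable_iff_integrableOn_Ioc_of_le hb.le] at this
    exact this
  · filter_upwards [MeasureTheory.ae_restrict_mem measurableSet_Ioc] with s hs
    have hs0 : 0 < s := hs.1
    rcases le_or_gt s 1 with h1 | h1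
    · have : -Real.log s ≤ 2 * s ^ (-(1/2) : ℝ) := by
        have := Real.log_le_rpow_div (x := s⁻¹) (ε := 1/2) (by positivity) (by norm_num)
        rw [Real.log_inv] at this
        have h2 : (s⁻¹ : ℝ) ^ ((1:ℝ)/2) = s ^ (-(1/2) : ℝ) := by
          rw [← Real.rpow_neg_one s, ← Real.rpow_mul hs0.le]
          norm_num
        rw [h2] at this
        linarith
      have hls : Real.log s ≤ 0 := Real.log_nonpos hs0.le h1
      have hrp : (0:ℝ) ≤ s ^ (-(1/2) : ℝ) := Real.rpow_nonneg hs0.le _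
      rw [Real.norm_eq_abs, abs_of_nonpos hls]
      nlinarith [abs_nonneg (Real.log b)]
    · have hls : 0 ≤ Real.log s := Real.log_nonneg h1.le
      have : Real.log s ≤ Real.log b := Real.log_le_log hs0 hs.2
      have hrp : (0:ℝ) ≤ s ^ (-(1/2) : ℝ) := Real.rpow_nonneg hs0.le _
      rw [Real.norm_eq_abs, abs_of_nonneg hls]
      have : Real.log s ≤ |Real.log b| := this.trans (le_abs_self _)
      nlinarith

-- the integrand of Φ
lemma g_cont {γ f : ℝ} (hγ : 0 < γ) (hf : 0 < f) :
    ContinuousAt (fun s : ℝ => Real.log (s ^ γ / (1 + s ^ γ))) f := by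
  have h1 : ContinuousAt (fun s : ℝ => s ^ γ) f :=
    Real.continuousAt_rpow_const f γ (Or.inl hf.ne')
  have hfp : 0 < f ^ γ := Real.rpow_pos_of_pos hf γ
  have h2 : ContinuousAt (fun s : ℝ => s ^ γ / (1 + s ^ γ)) f :=
    h1.div ((continuousAt_const).add h1) (by positivity)
  exact (Real.continuousAt_log (by positivity)).comp h2

lemma g_iI {γ b : ℝ} (hγ : 1 < γ) (hb : 0 < b) :
    IntervalIntegrable (fun s : ℝ => Real.log (s ^ γ / (1 + s ^ γ))) volume 0 b := by
  have hγ0 : 0 < γ := by linarith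
  have heq : ∀ s ∈ Ioc (0:ℝ) b,
      Real.log (s ^ γ / (1 + s ^ γ)) = γ * Real.log s - Real.log (1 + s ^ γ) := by
    intro s hs
    have hs0 : 0 < s := hs.1
    have hsp : 0 < s ^ γ := Real.rpow_pos_of_pos hs0 γ
    rw [Real.log_div hsp.ne' (by positivity), Real.log_rpow hs0]
  have h1 : IntervalIntegrable (fun s : ℝ => γ * Real.log s - Real.log (1 + s ^ γ))
      volume 0 b := by
    refine ((log_iI hb).const_mul γ).sub ?_
    refine ContinuousOn.intervalIntegrable ?_
    rw [uIcc_of_le hb.le]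
    intro s hs
    have h2 : ContinuousWithinAt (fun s : ℝ => s ^ γ) (Icc 0 b) s := by
      rcases eq_or_ne s 0 with rfl | hne
      · exact (Real.continuousAt_rpow_const 0 γ (Or.inr hγ0.le)).continuousWithinAt
      · exact (Real.continuousAt_rpow_const s γ (Or.inl hne)).continuousWithinAt
    have hsp : 0 ≤ s ^ γ := Real.rpow_nonneg hs.1 γ
    exact (Real.continuousAt_log (by positivity)).comp_continuousWithinAt
      (continuousWithinAt_const.add h2)
  rw [intervalIntegrable_iff_integrableOn_Ioc_of_le hb.le] at h1 ⊢
  exact h1.congr_fun (fun s hs => (heq s hs).symm) measurableSet_Ioc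

lemma Phi_hasDeriv {γ : ℝ} (hγ : 1 < γ) (Φ : ℝ → ℝ)
    (hΦ : ∀ f : ℝ, Φ f = (1 / γ) * ∫ s in (0:ℝ)..f, Real.log (s ^ γ / (1 + s ^ γ)))
    {f : ℝ} (hf : 0 < f) :
    HasDerivAt Φ ((1 / γ) * Real.log (f ^ γ / (1 + f ^ γ))) f := by
  have hΦfun : Φ = fun f => (1 / γ) * ∫ s in (0:ℝ)..f, Real.log (s ^ γ / (1 + s ^ γ)) :=
    funext hΦ
  rw [hΦfun]
  have hF : HasDerivAt (fun f => ∫ s in (0:ℝ)..f, Real.log (s ^ γ / (1 + s ^ γ)))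
      (Real.log (f ^ γ / (1 + f ^ γ))) f := by
    refine intervalIntegral.integral_hasDerivAt_right (g_iI hγ hf) ?_ (g_cont (by linarith) hf)
    exact ContinuousAt.stronglyMeasurableAtFilter isOpen_Ioi
      (fun x (hx : x ∈ Ioi 0) => g_cont (by linarith) hx) f (mem_Ioi.mpr hf)
  exact hF.const_mul (1/γ)

noncomputable def Pfun (γ : ℝ) (Φ : ℝ → ℝ) (s : ℝ) : ℝ :=
  Φ (1/s) + (1/γ) * Real.log (1 + s^γ) / s

noncomputable def Qfun (γ s : ℝ) : ℝ := s^γ / ((1+s^γ) * s^2)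

lemma inv_arg_simp {γ s : ℝ} (hs : 0 < s) :
    (1/s) ^ γ / (1 + (1/s) ^ γ) = 1 / (1 + s ^ γ) := by
  have h1 : (1/s) ^ γ = (s ^ γ)⁻¹ := by
    rw [one_div, ← Real.rpow_neg_one s, ← Real.rpow_mul hs.le, neg_one_mul,
      Real.rpow_neg hs.le]
  have hsp : 0 < s ^ γ := Real.rpow_pos_of_pos hs γ
  rw [h1]
  field_simp
  ring

lemma Psi_hasDeriv {γ : ℝ} (hγ : 1 < γ) (Φ Ψ : ℝ → ℝ)
    (hΦ : ∀ f : ℝ, Φ f = (1 / γ) * ∫ s in (0:ℝ)..f, Real.log (s ^ γ / (1 + s ^ γ)))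
    (hΨ : ∀ s : ℝ, 0 < s → Ψ s = s * Φ (1 / s))
    {s : ℝ} (hs : 0 < s) : HasDerivAt Ψ (Pfun γ Φ s) s := by
  have hγ0 : (0:ℝ) < γ := by linarith
  have hinv : HasDerivAt (fun x : ℝ => 1/x) (-(s^2)⁻¹) s := by
    simpa [one_div] using hasDerivAt_inv hs.ne'
  have hs1 : 0 < 1/s := by positivity
  have hcomp : HasDerivAt (fun x : ℝ => Φ (1/x))
      ((1/γ) * Real.log ((1/s)^γ / (1 + (1/s)^γ)) * (-(s^2)⁻¹)) s :=
    (Phi_hasDeriv hγ Φ hΦ hs1).comp s hinv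
  have hmul : HasDerivAt (fun x : ℝ => x * Φ (1/x))
      (1 * Φ (1/s) + s * ((1/γ) * Real.log ((1/s)^γ / (1 + (1/s)^γ)) * (-(s^2)⁻¹))) s :=
    (hasDerivAt_id s).mul hcomp
  have heq : (1:ℝ) * Φ (1/s) + s * ((1/γ) * Real.log ((1/s)^γ / (1 + (1/s)^γ)) * (-(s^2)⁻¹))
      = Pfun γ Φ s := by
    rw [inv_arg_simp hs]
    have hsp : 0 < s ^ γ := Real.rpow_pos_of_pos hs γ
    rw [one_div ((1:ℝ) + s^γ), Real.log_inv]
    unfold Pfun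
    field_simp
  rw [heq] at hmul
  have hev : Ψ =ᶠ[nhds s] fun x : ℝ => x * Φ (1/x) := by
    filter_upwards [Ioi_mem_nhds hs] with x hx
    exact hΨ x hx
  exact hmul.congr_of_eventuallyEq hev

lemma P_hasDeriv {γ : ℝ} (hγ : 1 < γ) (Φ : ℝ → ℝ)
    (hΦ : ∀ f : ℝ, Φ f = (1 / γ) * ∫ s in (0:ℝ)..f, Real.log (s ^ γ / (1 + s ^ γ)))
    {s : ℝ} (hs : 0 < s) : HasDerivAt (Pfun γ Φ) (Qfun γ s) s := by
  have hγ0 : (0:ℝ) < γ := by linarith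
  have hsp : 0 < s ^ γ := Real.rpow_pos_of_pos hs γ
  have hinv : HasDerivAt (fun x : ℝ => 1/x) (-(s^2)⁻¹) s := by
    simpa [one_div] using hasDerivAt_inv hs.ne'
  have hs1 : 0 < 1/s := by positivity
  have h1 : HasDerivAt (fun x : ℝ => Φ (1/x))
      ((1/γ) * Real.log ((1/s)^γ / (1 + (1/s)^γ)) * (-(s^2)⁻¹)) s :=
    (Phi_hasDeriv hγ Φ hΦ hs1).comp s hinv
  have h2 : HasDerivAt (fun x : ℝ => 1 + x ^ γ) (γ * s ^ (γ - 1)) s := by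
    simpa using (Real.hasDerivAt_rpow_const (x := s) (p := γ) (Or.inl hs.ne')).const_add 1
  have h3 : HasDerivAt (fun x : ℝ => Real.log (1 + x ^ γ))
      (γ * s ^ (γ - 1) / (1 + s ^ γ)) s := h2.log (by positivity)
  have h4 : HasDerivAt (fun x : ℝ => Real.log (1 + x ^ γ) / x)
      ((γ * s ^ (γ - 1) / (1 + s ^ γ) * s - Real.log (1 + s ^ γ) * 1) / s ^ 2) s :=
    h3.div (hasDerivAt_id s) hs.ne'
  have h5 := h1.add (h4.const_mul (1/γ))
  have hpow : s ^ (γ - 1) * s = s ^ γ := by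
    rw [← Real.rpow_add_one hs.ne' (γ-1)]
    ring_nf
  have heq : (1/γ) * Real.log ((1/s)^γ / (1 + (1/s)^γ)) * (-(s^2)⁻¹)
      + (1/γ) * ((γ * s ^ (γ - 1) / (1 + s ^ γ) * s - Real.log (1 + s ^ γ) * 1) / s ^ 2)
      = Qfun γ s := by
    rw [inv_arg_simp hs, one_div ((1:ℝ) + s^γ), Real.log_inv]
    unfold Qfun
    have h1t : (0:ℝ) < 1 + s ^ γ := by positivity
    field_simp
    linear_combination γ * hpow
  rw [heq] at h5
  have hPeq : Pfun γ Φ = fun x : ℝ => Φ (1/x) + 1/γ * (Real.log (1+x^γ)/x) := by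
    funext x
    unfold Pfun
    ring
  rw [hPeq]
  exact h5

lemma Qfun_pos {γ s : ℝ} (hs : 0 < s) : 0 < Qfun γ s := by
  unfold Qfun
  have := Real.rpow_pos_of_pos hs γ
  positivity

lemma P_strictMono {γ : ℝ} (hγ : 1 < γ) (Φ : ℝ → ℝ)
    (hΦ : ∀ f : ℝ, Φ f = (1 / γ) * ∫ s in (0:ℝ)..f, Real.log (s ^ γ / (1 + s ^ γ))) :
    StrictMonoOn (Pfun γ Φ) (Ioi 0) := by
  refine strictMonoOn_of_deriv_pos (convex_Ioi 0) ?_ ?_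
  · exact fun x hx => ((P_hasDeriv hγ Φ hΦ hx).continuousAt).continuousWithinAt
  · intro x hx
    rw [interior_Ioi] at hx
    rw [(P_hasDeriv hγ Φ hΦ hx).deriv]
    exact Qfun_pos hx

lemma gradient_ineq {γ : ℝ} (hγ : 1 < γ) (Φ Ψ : ℝ → ℝ)
    (hΦ : ∀ f : ℝ, Φ f = (1 / γ) * ∫ s in (0:ℝ)..f, Real.log (s ^ γ / (1 + s ^ γ)))
    (hΨ : ∀ s : ℝ, 0 < s → Ψ s = s * Φ (1 / s))
    {a b : ℝ} (ha : 0 < a) (hb : 0 < b) :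
    Ψ a - Ψ b ≤ Pfun γ Φ a * (a - b) := by
  rcases lt_trichotomy a b with h | h | h
  · -- a < b : MVT on [a,b]
    obtain ⟨c, hc, hceq⟩ := exists_hasDerivAt_eq_slope Ψ (Pfun γ Φ) h
      (fun x hx => (Psi_hasDeriv hγ Φ Ψ hΦ hΨ (lt_of_lt_of_le ha hx.1)).continuousAt.continuousWithinAt)
      (fun x hx => Psi_hasDeriv hγ Φ Ψ hΦ hΨ (lt_trans ha hx.1))
    have hPc : Pfun γ Φ a ≤ Pfun γ Φ c :=
      (P_strictMono hγ Φ hΦ (mem_Ioi.mpr ha) (mem_Ioi.mpr (lt_trans ha hc.1)) hc.1).le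
    have hba : 0 < b - a := by linarith
    have : Ψ b - Ψ a = Pfun γ Φ c * (b - a) := by
      field_simp at hceq
      linarith [hceq]
    nlinarith
  · simp [h]
  · obtain ⟨c, hc, hceq⟩ := exists_hasDerivAt_eq_slope Ψ (Pfun γ Φ) h
      (fun x hx => (Psi_hasDeriv hγ Φ Ψ hΦ hΨ (lt_of_lt_of_le hb hx.1)).continuousAt.continuousWithinAt)
      (fun x hx => Psi_hasDeriv hγ Φ Ψ hΦ hΨ (lt_trans hb hx.1))
    have hPc : Pfun γ Φ c ≤ Pfun γ Φ a :=
      (P_strictMono hγ Φ hΦ (mem_Ioi.mpr (lt_trans hb hc.1)) (mem_Ioi.mpr ha) hc.2).le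
    have hab : 0 < a - b := by linarith
    have : Ψ a - Ψ b = Pfun γ Φ c * (a - b) := by
      field_simp at hceq
      linarith [hceq]
    nlinarith

lemma reg_pkg {m : ℝ} (hm : 0 < m) (u : ℝ → ℝ)
    (hu : ContDiffOn ℝ 2 u (Set.Icc 0 m))
    (hu' : ∀ x ∈ Set.Icc 0 m, 0 < deriv u x) :
    ContinuousOn (deriv u) (Set.Icc 0 m) ∧
    (∀ x ∈ Set.Icc 0 m, HasDerivAt u (deriv u x) x) ∧
    ∃ u2 : ℝ → ℝ, ContinuousOn u2 (Set.Icc 0 m) ∧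
      ∀ x ∈ Set.Ioo 0 m, HasDerivAt (deriv u) (u2 x) x := by
  have hud : UniqueDiffOn ℝ (Set.Icc (0:ℝ) m) := uniqueDiffOn_Icc hm
  have hdiff : ∀ x ∈ Set.Icc 0 m, DifferentiableAt ℝ u x := by
    intro x hx
    by_contra h
    have := deriv_zero_of_not_differentiableAt h
    have := hu' x hx
    linarith
  have heqd : Set.EqOn (derivWithin u (Set.Icc 0 m)) (deriv u) (Set.Icc 0 m) :=
    fun x hx => DifferentiableAt.derivWithin (hdiff x hx) (hud x hx)
  have hC1 : ContDiffOn ℝ 1 (derivWithin u (Set.Icc 0 m)) (Set.Icc 0 m) :=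
    hu.derivWithin hud (by norm_num)
  have hcont : ContinuousOn (deriv u) (Set.Icc 0 m) := hC1.continuousOn.congr heqd.symm
  refine ⟨hcont, fun x hx => (hdiff x hx).hasDerivAt, ?_⟩
  refine ⟨derivWithin (derivWithin u (Set.Icc 0 m)) (Set.Icc 0 m), ?_, ?_⟩
  · exact hC1.continuousOn_derivWithin hud (by norm_num)
  · intro x hx
    have hxI : Set.Icc (0:ℝ) m ∈ nhds x := Icc_mem_nhds hx.1 hx.2
    have hdw : DifferentiableAt ℝ (derivWithin u (Set.Icc 0 m)) x :=
      ((hC1.differentiableOn (by norm_num)) x (Set.mem_Icc.mpr ⟨hx.1.le, hx.2.le⟩)).differentiableAt hxI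
    have h1 : derivWithin (derivWithin u (Set.Icc 0 m)) (Set.Icc 0 m) x
        = deriv (derivWithin u (Set.Icc 0 m)) x :=
      DifferentiableAt.derivWithin hdw (hud x (Set.mem_Icc.mpr ⟨hx.1.le, hx.2.le⟩))
    rw [h1]
    have hev : deriv u =ᶠ[nhds x] derivWithin u (Set.Icc 0 m) := by
      filter_upwards [hxI] with y hy
      exact (heqd hy).symm
    exact (hdw.hasDerivAt.congr_of_eventuallyEq hev)

lemma Qfun_contAt {γ s : ℝ} (hs : 0 < s) : ContinuousAt (Qfun γ) s := by
  unfold Qfun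
  have h1 : ContinuousAt (fun x : ℝ => x ^ γ) s := Real.continuousAt_rpow_const s γ (Or.inl hs.ne')
  have hsp : 0 < s ^ γ := Real.rpow_pos_of_pos hs γ
  exact h1.div ((continuousAt_const.add h1).mul ((continuousAt_id).pow 2)) (by positivity)

theorem stmt_11 (γ m R₁ τ : ℝ) (hγ : 1 < γ) (hm : 0 < m) (hR₁ : 0 < R₁) (hτ : 0 < τ)
    (Φ Ψ : ℝ → ℝ)
    (hΦ : ∀ f : ℝ, Φ f = (1 / γ) * ∫ s in (0:ℝ)..f, Real.log (s ^ γ / (1 + s ^ γ)))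
    (hΨ : ∀ s : ℝ, 0 < s → Ψ s = s * Φ (1 / s))
    (H : (ℝ → ℝ) → ℝ)
    (hH : ∀ w : ℝ → ℝ, H w = ∫ x in (0:ℝ)..m, ((w x) ^ 2 / 2 + Ψ (deriv w x)))
    (u un : ℝ → ℝ)
    (hu : ContDiffOn ℝ 2 u (Set.Icc 0 m)) (hun : ContDiffOn ℝ 2 un (Set.Icc 0 m))
    (hu' : ∀ x ∈ Set.Icc 0 m, 0 < deriv u x)
    (hun' : ∀ x ∈ Set.Icc 0 m, 0 < deriv un x)
    (hbc0 : u 0 = -R₁) (hbcn0 : un 0 = -R₁) (hbcm : u m = R₁) (hbcnm : un m = R₁)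
    (heq : ∀ x ∈ Set.Ioo 0 m,
      (deriv u x) ^ γ * (u x - un x) / τ
        - (1 / (γ - 1)) * deriv (fun y => (deriv u y) ^ (γ - 1)) x
        + u x * ((deriv u x) ^ γ + 1) = 0) :
    H u - H un ≤ -τ * ∫ x in (0:ℝ)..m,
        (deriv u x) ^ 2 * deriv (deriv Ψ) (deriv u x) * |(u x - un x) / τ| ^ 2 ∧
    -τ * (∫ x in (0:ℝ)..m,
        (deriv u x) ^ 2 * deriv (deriv Ψ) (deriv u x) * |(u x - un x) / τ| ^ 2) ≤ 0 := by
  obtain ⟨cu', hu_hd, u2, hu2c, hu2d⟩ := reg_pkg hm u hu hu'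
  obtain ⟨cun', hun_hd, un2, hun2c, hun2d⟩ := reg_pkg hm un hun hun'
  have hIcc : Set.uIcc (0:ℝ) m = Set.Icc 0 m := uIcc_of_le hm.le
  -- second derivative of Ψ
  have hd2Ψ : ∀ s : ℝ, 0 < s → deriv (deriv Ψ) s = Qfun γ s := by
    intro s hs
    have hev : deriv Ψ =ᶠ[nhds s] Pfun γ Φ := by
      filter_upwards [Ioi_mem_nhds hs] with t ht
      exact (Psi_hasDeriv hγ Φ Ψ hΦ hΨ ht).deriv
    rw [hev.deriv_eq, (P_hasDeriv hγ Φ hΦ hs).deriv]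
  -- the dissipation density
  set D : ℝ → ℝ := fun x => (deriv u x)^γ / (1 + (deriv u x)^γ) * ((u x - un x)/τ)^2 with hD
  have hRD : Set.EqOn
      (fun x => (deriv u x) ^ 2 * deriv (deriv Ψ) (deriv u x) * |(u x - un x) / τ| ^ 2)
      D (Set.uIcc 0 m) := by
    rw [hIcc]
    intro x hx
    have hs : 0 < deriv u x := hu' x hx
    have hsp : 0 < (deriv u x)^γ := Real.rpow_pos_of_pos hs γ
    simp only [hD, hd2Ψ _ hs, sq_abs]
    unfold Qfun
    field_simp
  have hDnn : ∀ x ∈ Set.Icc (0:ℝ) m, 0 ≤ D x := by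
    intro x hx
    have hs : 0 < deriv u x := hu' x hx
    have hsp : 0 < (deriv u x)^γ := Real.rpow_pos_of_pos hs γ
    have : 0 < 1 + (deriv u x)^γ := by linarith
    positivity
  have hRint : (∫ x in (0:ℝ)..m,
      (deriv u x) ^ 2 * deriv (deriv Ψ) (deriv u x) * |(u x - un x) / τ| ^ 2)
      = ∫ x in (0:ℝ)..m, D x := intervalIntegral.integral_congr hRD
  have hDnn' : 0 ≤ ∫ x in (0:ℝ)..m, D x := intervalIntegral.integral_nonneg hm.le hDnn
  have hcu : ContinuousOn u (Set.Icc 0 m) := hu.continuousOn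
  have hcun : ContinuousOn un (Set.Icc 0 m) := hun.continuousOn
  have iI : ∀ {f : ℝ → ℝ}, ContinuousOn f (Set.Icc 0 m) → IntervalIntegrable f volume 0 m :=
    fun h => ContinuousOn.intervalIntegrable (hIcc ▸ h)
  have cPu' : ContinuousOn (fun x => Pfun γ Φ (deriv u x)) (Set.Icc 0 m) :=
    fun x hx => ((P_hasDeriv hγ Φ hΦ (hu' x hx)).continuousAt).comp_continuousWithinAt (cu' x hx)
  have cQu' : ContinuousOn (fun x => Qfun γ (deriv u x)) (Set.Icc 0 m) :=
    fun x hx => (Qfun_contAt (hu' x hx)).comp_continuousWithinAt (cu' x hx)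
  have cΨu : ContinuousOn (fun x => Ψ (deriv u x)) (Set.Icc 0 m) :=
    fun x hx => ((Psi_hasDeriv hγ Φ Ψ hΦ hΨ (hu' x hx)).continuousAt).comp_continuousWithinAt (cu' x hx)
  have cΨun : ContinuousOn (fun x => Ψ (deriv un x)) (Set.Icc 0 m) :=
    fun x hx => ((Psi_hasDeriv hγ Φ Ψ hΦ hΨ (hun' x hx)).continuousAt).comp_continuousWithinAt (cun' x hx)
  set K : ℝ → ℝ := fun x => u x * (u x - un x)
      + Pfun γ Φ (deriv u x) * (deriv u x - deriv un x) with hK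
  set G : ℝ → ℝ := fun x => Qfun γ (deriv u x) * u2 x * (u x - un x)
      + Pfun γ Φ (deriv u x) * (deriv u x - deriv un x) with hG
  set K2 : ℝ → ℝ := fun x => u x * (u x - un x)
      - Qfun γ (deriv u x) * u2 x * (u x - un x) with hK2
  have hKc : ContinuousOn K (Set.Icc 0 m) :=
    (hcu.mul (hcu.sub hcun)).add (cPu'.mul (cu'.sub cun'))
  have hGc : ContinuousOn G (Set.Icc 0 m) :=
    ((cQu'.mul hu2c).mul (hcu.sub hcun)).add (cPu'.mul (cu'.sub cun'))
  have hK2c : ContinuousOn K2 (Set.Icc 0 m) :=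
    (hcu.mul (hcu.sub hcun)).sub ((cQu'.mul hu2c).mul (hcu.sub hcun))
  have hDc : ContinuousOn D (Set.Icc 0 m) := by
    intro x hx
    have hs : 0 < deriv u x := hu' x hx
    have hsp : 0 < (deriv u x)^γ := Real.rpow_pos_of_pos hs γ
    have h1 : ContinuousWithinAt (fun x => (deriv u x)^γ) (Set.Icc 0 m) x :=
      (Real.continuousAt_rpow_const _ γ (Or.inl hs.ne')).comp_continuousWithinAt (cu' x hx)
    exact (h1.div (continuousWithinAt_const.add h1) (ne_of_gt (show (0:ℝ) < 1 + (deriv u x)^γ by linarith))).mul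
      (((hcu.sub hcun) x hx).div_const τ |>.pow 2)
  -- FTC / integration by parts
  have hFTC : (∫ x in (0:ℝ)..m, G x) = 0 := by
    have hder : ∀ x ∈ Set.Ioo (0:ℝ) m,
        HasDerivAt (fun y => Pfun γ Φ (deriv u y) * (u y - un y)) (G x) x := by
      intro x hx
      have hxIcc : x ∈ Set.Icc (0:ℝ) m := Set.Ioo_subset_Icc_self hx
      have h1 : HasDerivAt (fun y => Pfun γ Φ (deriv u y)) (Qfun γ (deriv u x) * u2 x) x :=
        (P_hasDeriv hγ Φ hΦ (hu' x hxIcc)).comp x (hu2d x hx)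
      have h2 : HasDerivAt (fun y => u y - un y) (deriv u x - deriv un x) x :=
        (hu_hd x hxIcc).sub (hun_hd x hxIcc)
      exact h1.mul h2
    have h0 := intervalIntegral.integral_eq_sub_of_hasDerivAt_of_le hm.le
      (hIcc ▸ (cPu'.mul (hcu.sub hcun))) hder (iI hGc)
    rw [h0, hbcm, hbcnm, hbc0, hbcn0]
    ring
  -- pointwise identity from the Euler equation
  have hpt : ∀ x ∈ Set.Ioo (0:ℝ) m, K2 x = -τ * D x := by
    intro x hx
    have hxIcc : x ∈ Set.Icc (0:ℝ) m := Set.Ioo_subset_Icc_self hx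
    have ha : 0 < deriv u x := hu' x hxIcc
    have hap : 0 < (deriv u x)^γ := Real.rpow_pos_of_pos ha γ
    have hda : deriv (fun y => (deriv u y) ^ (γ - 1)) x
        = (γ - 1) * (deriv u x) ^ (γ - 1 - 1) * u2 x :=
      ((Real.hasDerivAt_rpow_const (x := deriv u x) (p := γ - 1)
        (Or.inl ha.ne')).comp x (hu2d x hx)).deriv
    have h := heq x hx
    rw [hda] at h
    have hpow : (deriv u x) ^ (γ - 1 - 1) = (deriv u x)^γ / (deriv u x)^2 := by
      rw [show γ - 1 - 1 = γ - (2:ℝ) by ring, Real.rpow_sub ha, Real.rpow_two]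
    rw [hpow] at h
    have hmid : (1 / (γ - 1)) * ((γ - 1) * ((deriv u x)^γ / (deriv u x)^2) * u2 x)
        = (deriv u x)^γ / (deriv u x)^2 * u2 x := by
      have : γ - 1 ≠ 0 := by linarith
      field_simp
    rw [hmid] at h
    have hb : u x * ((deriv u x)^γ + 1)
        = (deriv u x)^γ / (deriv u x)^2 * u2 x - (deriv u x)^γ * (u x - un x) / τ := by
      linarith
    simp only [hK2, hD]
    unfold Qfun
    have h1t : (0:ℝ) < 1 + (deriv u x)^γ := by linarith
    field_simp at hb ⊢
    linear_combination (u x - un x) * hb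
  -- a.e. equality on the interval
  have haeeq : (∫ x in (0:ℝ)..m, K2 x) = ∫ x in (0:ℝ)..m, -τ * D x := by
    apply intervalIntegral.integral_congr_ae
    have hne : ∀ᵐ x : ℝ ∂volume, x ≠ m := by
      have hs : {x : ℝ | ¬ x ≠ m} = {m} := by ext y; simp
      rw [MeasureTheory.ae_iff, hs]
      exact measure_singleton m
    filter_upwards [hne] with x hx hxI
    rw [Set.uIoc_of_le hm.le] at hxI
    exact hpt x ⟨hxI.1, lt_of_le_of_ne hxI.2 hx⟩
  constructor
  · rw [hRint, hH u, hH un]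
    have hIE1 : IntervalIntegrable (fun x => u x ^ 2 / 2 + Ψ (deriv u x)) volume 0 m :=
      iI (((hcu.pow 2).div_const 2).add cΨu)
    have hIE2 : IntervalIntegrable (fun x => un x ^ 2 / 2 + Ψ (deriv un x)) volume 0 m :=
      iI (((hcun.pow 2).div_const 2).add cΨun)
    rw [← intervalIntegral.integral_sub hIE1 hIE2]
    have step1 : (∫ x in (0:ℝ)..m, ((u x ^ 2 / 2 + Ψ (deriv u x))
        - (un x ^ 2 / 2 + Ψ (deriv un x)))) ≤ ∫ x in (0:ℝ)..m, K x := by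
      refine intervalIntegral.integral_mono_on hm.le (hIE1.sub hIE2) (iI hKc) ?_
      intro x hx
      have h1 : u x ^ 2 / 2 - un x ^ 2 / 2 ≤ u x * (u x - un x) := by nlinarith [sq_nonneg (u x - un x)]
      have h2 : Ψ (deriv u x) - Ψ (deriv un x)
          ≤ Pfun γ Φ (deriv u x) * (deriv u x - deriv un x) :=
        gradient_ineq hγ Φ Ψ hΦ hΨ (hu' x hx) (hun' x hx)
      simp only [hK]
      linarith
    have step2 : (∫ x in (0:ℝ)..m, K x) = ∫ x in (0:ℝ)..m, K2 x := by
      have h1 : (∫ x in (0:ℝ)..m, K x) = (∫ x in (0:ℝ)..m, K2 x) + ∫ x in (0:ℝ)..m, G x := by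
        rw [← intervalIntegral.integral_add (iI hK2c) (iI hGc)]
        apply intervalIntegral.integral_congr
        intro x hx
        simp only [hK, hK2, hG]
        ring
      rw [h1, hFTC, add_zero]
    have step3 : (∫ x in (0:ℝ)..m, K2 x) = -τ * ∫ x in (0:ℝ)..m, D x := by
      rw [haeeq, intervalIntegral.integral_const_mul]
    calc (∫ x in (0:ℝ)..m, ((u x ^ 2 / 2 + Ψ (deriv u x)) - (un x ^ 2 / 2 + Ψ (deriv un x))))
        ≤ ∫ x in (0:ℝ)..m, K x := step1
      _ = ∫ x in (0:ℝ)..m, K2 x := step2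
      _ = -τ * ∫ x in (0:ℝ)..m, D x := step3
  · rw [hRint]
    nlinarith
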